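/- arXiv:2308.05111 — 8 statements merged into one kernel-verified Lean document; each statement's English description precedes it below -/
import Mathlib

section
/- With G = L F_X² and A = hF_X + kF as in the paper's example (h = (L_X(F_X+F_Y))/2 + L F_XY, k = -F_X - (L_X F_XY)/2), at any point P with F(P) = 0 and F_X(P) = 0 one has A_Y(P) = L(P)·F_XY(P)², G_YY(P)/2 = L(P)·F_XY(P)², and G_Y(P) = 0; hence A_Y(P) = G_YY(P)/2 + F_YY(P)G_Y(P)/(2F_Y(P)) provided F_Y(P) ≠ 0. -/
open MvPolynomial

noncomputable section

abbrev P2 : Type := MvPolynomial (Fin 2) ℂ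

noncomputable def dX (f : P2) : P2 := pderiv 0 f
noncomputable def dY (f : P2) : P2 := pderiv 1 f

noncomputable def hpol (L F : P2) : P2 :=
  C ((1:ℂ)/2) * dX L * (dX F + dY F) + L * dY (dX F)

noncomputable def kpol (L F : P2) : P2 :=
  - dX F - C ((1:ℂ)/2) * dX L * dY (dX F)

noncomputable def hpol' (L F : P2) : P2 :=
  - dX L * dX F - L * dX (dX F)

noncomputable def kpol' (L F : P2) : P2 :=
  dX F + C ((1:ℂ)/2) * dX L * dX (dX F)

noncomputable def Apol (L F : P2) : P2 := hpol L F * dX F + kpol L F * F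

noncomputable def Bpol (L F : P2) : P2 := hpol' L F * dX F + kpol' L F * F

noncomputable def Gpol (L F : P2) : P2 := L * (dX F) ^ 2

/-! At a common zero `P` of `F` and `F_X`, the derivative of a product with a factor vanishing
at `P` only sees the derivative of that factor. Hence `A_Y(P) = h(P) F_XY(P) + k(P) F_Y(P)`,
where the two `L_X`-terms cancel, while `G = (L F_X) F_X` has `G_Y(P) = 0` and
`G_YY(P) = 2 L(P) F_XY(P)²`. -/

section

variable {σ R : Type*} [CommSemiring R] {P : σ → R} {i : σ}

theorem eval_pderiv_mul_of_eval_eq_zero {q : MvPolynomial σ R} (hq : eval P q = 0)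
    (p : MvPolynomial σ R) : eval P (pderiv i (p * q)) = eval P p * eval P (pderiv i q) := by
  simp [hq]

theorem eval_pderiv_mul_add_mul_of_eval_eq_zero {a b : MvPolynomial σ R} (ha : eval P a = 0)
    (hb : eval P b = 0) (p q : MvPolynomial σ R) :
    eval P (pderiv i (p * a + q * b)) =
      eval P p * eval P (pderiv i a) + eval P q * eval P (pderiv i b) := by
  rw [map_add, map_add, eval_pderiv_mul_of_eval_eq_zero ha, eval_pderiv_mul_of_eval_eq_zero hb]

theorem eval_pderiv_mul_sq_of_eval_eq_zero {q : MvPolynomial σ R} (hq : eval P q = 0)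
    (p : MvPolynomial σ R) : eval P (pderiv i (p * q ^ 2)) = 0 := by
  rw [sq, ← mul_assoc, eval_pderiv_mul_of_eval_eq_zero hq, map_mul, hq, mul_zero, zero_mul]

theorem eval_pderiv_pderiv_mul_sq_of_eval_eq_zero {q : MvPolynomial σ R} (hq : eval P q = 0)
    (p : MvPolynomial σ R) :
    eval P (pderiv i (pderiv i (p * q ^ 2))) = 2 * eval P p * eval P (pderiv i q) ^ 2 := by
  have hderiv : pderiv i (p * q ^ 2) = (pderiv i p * q + 2 * p * pderiv i q) * q := by
    simp only [Derivation.leibniz, Derivation.leibniz_pow, smul_eq_mul, nsmul_eq_mul]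
    ring
  rw [hderiv, eval_pderiv_mul_of_eval_eq_zero hq]
  simp only [map_add, map_mul, hq, mul_zero, zero_add, map_ofNat]
  ring

end

/-- Condition 3 at the points P₅,…,P₁₆ :
A_Y(P) = L(P)·F_XY(P)², G_YY(P)/2 = L(P)·F_XY(P)², G_Y(P) = 0; hence
A_Y(P) = G_YY(P)/2 + F_YY(P)·G_Y(P)/(2·F_Y(P)) when F_Y(P) ≠ 0. -/
theorem condition3_at_FX_zeros (F L : P2)
    (P : Fin 2 → ℂ) (hFP : eval P F = 0) (hFXP : eval P (dX F) = 0) :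
    eval P (dY (Apol L F)) = eval P L * (eval P (dY (dX F))) ^ 2 ∧
    eval P (dY (dY (Gpol L F))) / 2 = eval P L * (eval P (dY (dX F))) ^ 2 ∧
    eval P (dY (Gpol L F)) = 0 ∧
    (eval P (dY F) ≠ 0 →
      eval P (dY (Apol L F)) =
        eval P (dY (dY (Gpol L F))) / 2 +
          eval P (dY (dY F)) * eval P (dY (Gpol L F)) / (2 * eval P (dY F))) := by
  have hA : eval P (dY (Apol L F)) = eval P L * eval P (dY (dX F)) ^ 2 := by
    rw [dY, Apol, eval_pderiv_mul_add_mul_of_eval_eq_zero hFXP hFP]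
    simp only [hpol, kpol, map_add, map_sub, map_neg, map_mul, eval_C, hFXP, dY]
    ring
  have hGYY : eval P (dY (dY (Gpol L F))) / 2 = eval P L * eval P (dY (dX F)) ^ 2 := by
    unfold dY
    rw [Gpol, eval_pderiv_pderiv_mul_sq_of_eval_eq_zero hFXP]
    ring
  have hGY : eval P (dY (Gpol L F)) = 0 := eval_pderiv_mul_sq_of_eval_eq_zero hFXP L
  exact ⟨hA, hGYY, hGY, fun _ => by rw [hA, hGYY, hGY, mul_zero, zero_div, add_zero]⟩
end
end

section
/- With G = L F_X², A = hF_X + kF, h = (L_X(F_X+F_Y))/2 + L F_XY, k = -F_X - (L_X F_XY)/2, at a point P where F(P) = 0, L(P) = 0, F_X(P) = F_Y(P) ≠ 0, and L_X(P) = L_Y(P), and additionally L_XX = L_XY = L_YY = 2 (as holds for L = (X+Y)(X+Y+b)), one has A_Y(P) = G_YY(P)/2 + F_YY(P)G_Y(P)/(2F_Y(P)). -/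
open MvPolynomial

noncomputable section

/-- Condition 3 at the bitangency points P₁,…,P₄ :
A_Y(P) = G_YY(P)/2 + F_YY(P)·G_Y(P)/(2·F_Y(P)). -/
theorem condition3_at_bitangency (F L : P2)
    (hF4 : F.totalDegree = 4)
    (hLXX : dX (dX L) = C 2) (hLXY : dY (dX L) = C 2) (hLYY : dY (dY L) = C 2)
    (P : Fin 2 → ℂ) (hFP : eval P F = 0) (hLP : eval P L = 0)
    (htan : eval P (dX F) = eval P (dY F)) (hFY : eval P (dY F) ≠ 0)
    (hLsym : eval P (dX L) = eval P (dY L)) :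
    eval P (dY (Apol L F)) =
      eval P (dY (dY (Gpol L F))) / 2 +
        eval P (dY (dY F)) * eval P (dY (Gpol L F)) / (2 * eval P (dY F)) := by
  have key : ∀ f : P2, pderiv (1 : Fin 2) (pderiv 0 f) = pderiv 0 (pderiv 1 f) := by
    intro f
    induction f using MvPolynomial.induction_on with
    | C a => simp
    | add p q hp hq => simp [hp, hq]
    | mul_X p n ih =>
      simp only [pderiv_mul, map_add, ih]
      fin_cases n <;> simp [pderiv_X, Pi.single]
  simp only [Apol, hpol, kpol, Gpol, dX, dY, pow_two] at *
  simp only [pderiv_mul, pderiv_C, map_add, map_neg, map_sub, map_mul, zero_mul, add_zero,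
    zero_add, mul_zero, key] at *
  have e2 : eval P (C (2:ℂ) : P2) = 2 := by simp
  rw [hLXY, hLYY] at *
  simp only [map_add, map_neg, map_sub, map_mul, eval_C] at *
  rw [hFP, hLP, htan, hLsym]
  field_simp
  ring
end
end

section
/- With G = L F_X², A = hF_X + kF, B = h'F_X + k'F as in the paper's example, at any point P with F(P) = 0, F_X(P) = 0, and F_Y(P) ≠ 0, one has B_Y(P) - A_X(P) = -2L(P)F_XY(P)F_XX(P) and -F_XY(P)G_Y(P)/F_Y(P) - G_XY(P) = -2L(P)F_XY(P)F_XX(P); hence B_Y(P) - A_X(P) = -F_XY(P)G_Y(P)/F_Y(P) - G_XY(P). -/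
open MvPolynomial

noncomputable section

/-- Condition 4 at the points P₅,…,P₁₆ :
B_Y - A_X = -2·L·F_XY·F_XX = -F_XY·G_Y/F_Y - G_XY at P. -/
theorem condition4_at_FX_zeros (F L : P2)
    (P : Fin 2 → ℂ) (hFP : eval P F = 0) (hFXP : eval P (dX F) = 0)
    (hFY : eval P (dY F) ≠ 0) :
    eval P (dY (Bpol L F)) - eval P (dX (Apol L F))
        = -2 * eval P L * eval P (dY (dX F)) * eval P (dX (dX F)) ∧
    -(eval P (dY (dX F)) * eval P (dY (Gpol L F))) / eval P (dY F)
        - eval P (dY (dX (Gpol L F)))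
        = -2 * eval P L * eval P (dY (dX F)) * eval P (dX (dX F)) ∧
    eval P (dY (Bpol L F)) - eval P (dX (Apol L F))
        = -(eval P (dY (dX F)) * eval P (dY (Gpol L F))) / eval P (dY F)
            - eval P (dY (dX (Gpol L F))) := by
  simp only [dX] at hFXP
  refine ⟨?_, ?_, ?_⟩ <;>
  · simp only [Bpol, Apol, Gpol, hpol, kpol, hpol', kpol', dX, dY, pow_two]
    simp only [map_add, map_mul, map_neg, map_sub, pderiv_mul, pderiv_C, eval_mul,
      eval_add, eval_neg, eval_sub, eval_C, zero_mul, mul_zero]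
    simp only [hFP, hFXP, zero_mul, mul_zero, add_zero, zero_add, neg_zero, sub_zero]
    field_simp
    ring
end
end

section
/- With the definitions of the paper's example and L = (X+Y)(X+Y+b), at a point P where F(P) = 0, L(P) = 0, F_X(P) = F_Y(P) ≠ 0, and L_X(P) = L_Y(P), one has B_Y(P) - A_X(P) = -2F_X(P)² - 3L_X(P)F_X(P)F_XY(P) - 2L_Y(P)F_X(P)F_XX(P), and this equals -F_XY(P)G_Y(P)/F_Y(P) - G_XY(P). -/
open MvPolynomial

noncomputable section

/-!
At `P` every term of `B_Y - A_X`, `G_Y` and `G_XY` that carries a factor `F` or `L` vanishes;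
in particular so do the only third-order terms, `L F_XXY`. By the Leibniz rule what remains is
a polynomial in `F_X = F_Y`, `F_XX`, `F_XY`, `L_X = L_Y` and the second partials of `L`, which
for `L = (X + Y)(X + Y + b)` are all `2`.
-/

theorem pderiv_pderiv_comm {σ R : Type*} [CommSemiring R] (i j : σ) (f : MvPolynomial σ R) :
    pderiv i (pderiv j f) = pderiv j (pderiv i f) := by
  classical
  induction f using MvPolynomial.induction_on with
  | C a => simp
  | add p q hp hq => simp [hp, hq]
  | mul_X p n hp =>
    simp only [pderiv_mul, pderiv_X, Pi.single_apply, map_add, hp]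
    split_ifs <;> simp; ring

section ValuesAtPoint

variable {L F : P2} {P : Fin 2 → ℂ}

lemma eval_dY_Bpol_sub_eval_dX_Apol (hFP : eval P F = 0) (hLP : eval P L = 0)
    (htan : eval P (dX F) = eval P (dY F)) (hLsym : eval P (dX L) = eval P (dY L)) :
    eval P (dY (Bpol L F)) - eval P (dX (Apol L F))
      = (2 - eval P (dX (dX L)) - eval P (dY (dX L))) * eval P (dX F) ^ 2
        - 3 * eval P (dX L) * eval P (dX F) * eval P (dY (dX F))
        - 2 * eval P (dY L) * eval P (dX F) * eval P (dX (dX F)) := by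
  simp only [dX, dY] at htan hLsym
  simp only [Apol, Bpol, hpol, kpol, hpol', kpol', dX, dY, pderiv_mul, pderiv_C, pderiv_pderiv_comm 0 1 F,
    map_add, map_neg, map_sub, map_mul, map_zero, eval_C]
  rw [hFP, hLP, ← htan, ← hLsym]
  ring

lemma eval_dY_Gpol (hLP : eval P L = 0) :
    eval P (dY (Gpol L F)) = eval P (dY L) * eval P (dX F) ^ 2 := by
  simp only [Gpol, sq, dY, pderiv_mul, map_add, map_mul, hLP]
  ring

lemma eval_dY_dX_Gpol (hLP : eval P L = 0) :
    eval P (dY (dX (Gpol L F)))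
      = eval P (dY (dX L)) * eval P (dX F) ^ 2 + 2 * eval P (dY L) * eval P (dX F) * eval P (dX (dX F))
        + 2 * eval P (dX L) * eval P (dX F) * eval P (dY (dX F)) := by
  simp only [Gpol, sq, dX, dY, pderiv_mul, map_add, map_mul, hLP]
  ring

end ValuesAtPoint

lemma dX_dX_linePair (b : ℂ) : dX (dX ((X 1 + X 0) * (X 1 + X 0 + C b) : P2)) = 2 := by
  norm_num [dX, pderiv_mul]

lemma dY_dX_linePair (b : ℂ) : dY (dX ((X 1 + X 0) * (X 1 + X 0 + C b) : P2)) = 2 := by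
  norm_num [dX, dY, pderiv_mul]

/-- Condition 4 at the bitangency points P₁,…,P₄ :
B_Y - A_X = -2F_X² - 3L_X F_X F_XY - 2L_Y F_X F_XX = -F_XY G_Y/F_Y - G_XY at P. -/
theorem condition4_at_bitangency (F : P2) (b : ℂ)
    (L : P2) (hLdef : L = (X 1 + X 0) * (X 1 + X 0 + C b))
    (P : Fin 2 → ℂ) (hFP : eval P F = 0) (hLP : eval P L = 0)
    (htan : eval P (dX F) = eval P (dY F)) (hFY : eval P (dY F) ≠ 0)
    (hLsym : eval P (dX L) = eval P (dY L)) :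
    eval P (dY (Bpol L F)) - eval P (dX (Apol L F))
        = -2 * (eval P (dX F)) ^ 2
            - 3 * eval P (dX L) * eval P (dX F) * eval P (dY (dX F))
            - 2 * eval P (dY L) * eval P (dX F) * eval P (dX (dX F)) ∧
    -2 * (eval P (dX F)) ^ 2
        - 3 * eval P (dX L) * eval P (dX F) * eval P (dY (dX F))
        - 2 * eval P (dY L) * eval P (dX F) * eval P (dX (dX F))
      = -(eval P (dY (dX F)) * eval P (dY (Gpol L F))) / eval P (dY F)
          - eval P (dY (dX (Gpol L F))) := by
  have hLXX : dX (dX L) = 2 := by rw [hLdef, dX_dX_linePair]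
  have hLXY : dY (dX L) = 2 := by rw [hLdef, dY_dX_linePair]
  have hFX : eval P (dX F) ≠ 0 := by rwa [htan]
  refine ⟨?_, ?_⟩
  · rw [eval_dY_Bpol_sub_eval_dX_Apol hFP hLP htan hLsym, hLXX, hLXY, map_ofNat]
    ring
  · rw [eval_dY_Gpol hLP, eval_dY_dX_Gpol hLP, hLXY, map_ofNat, ← htan, ← hLsym]
    field_simp
    ring
end
end

section
/- With G = L F_X², B = h'F_X + k'F, h' = -L_X F_X - L F_XX, k' = F_X + (L_X F_XX)/2, at any point P with F(P) = 0, F_X(P) = 0, F_Y(P) ≠ 0, one has B_X(P) = -L(P)F_XX(P)² = -G_XX(P)/2 - F_XX(P)G_Y(P)/(2F_Y(P)). -/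
open MvPolynomial

noncomputable section

/-!
Differentiating a product `a * g` once and evaluating at a zero of `g` leaves only
`a * ∂g`. Since `F` and `F_X` both vanish at `P`, this gives `B_X(P) = h'(P) F_XX(P)`
with `h'(P) = -L(P) F_XX(P)`; and since `G = L F_X²` vanishes to second order along
`F_X = 0`, `G_Y(P) = 0` and `G_XX(P) = 2 L(P) F_XX(P)²`.
-/

namespace MvPolynomial

variable {σ R : Type*} [CommRing R] {x : σ → R} {f g : MvPolynomial σ R}

theorem eval_pderiv_mul_of_eval_eq_zero (i : σ) (hg : eval x g = 0) :
    eval x (pderiv i (f * g)) = eval x f * eval x (pderiv i g) := by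
  simp [hg]

theorem eval_pderiv_mul_sq_of_eval_eq_zero (i : σ) (hg : eval x g = 0) :
    eval x (pderiv i (f * g ^ 2)) = 0 := by
  rw [sq, ← mul_assoc, eval_pderiv_mul_of_eval_eq_zero i hg, eval_mul, hg, mul_zero, zero_mul]

theorem eval_pderiv_pderiv_mul_sq_of_eval_eq_zero (i j : σ) (hg : eval x g = 0) :
    eval x (pderiv i (pderiv j (f * g ^ 2))) =
      2 * eval x f * eval x (pderiv i g) * eval x (pderiv j g) := by
  simp [sq, hg]
  ring

end MvPolynomial

theorem eval_dX_Bpol_of_eval_eq_zero {L F : P2} {P : Fin 2 → ℂ} (hFP : eval P F = 0)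
    (hFXP : eval P (dX F) = 0) :
    eval P (dX (Bpol L F)) = -(eval P L) * (eval P (dX (dX F))) ^ 2 := by
  rw [Bpol, dX, map_add, eval_add, eval_pderiv_mul_of_eval_eq_zero 0 hFXP,
    eval_pderiv_mul_of_eval_eq_zero 0 hFP, ← dX, ← dX, hFXP, mul_zero, add_zero]
  simp only [hpol', eval_sub, eval_mul, eval_neg, hFXP]
  ring

theorem condition5_at_FX_zeros_general (F L : P2)
    (P : Fin 2 → ℂ) (hFP : eval P F = 0) (hFXP : eval P (dX F) = 0) :
    eval P (dX (Bpol L F)) = -(eval P L) * (eval P (dX (dX F))) ^ 2 ∧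
    -(eval P L) * (eval P (dX (dX F))) ^ 2
      = -(eval P (dX (dX (Gpol L F)))) / 2
          - eval P (dX (dX F)) * eval P (dY (Gpol L F)) / (2 * eval P (dY F)) := by
  have hGY : eval P (dY (Gpol L F)) = 0 := eval_pderiv_mul_sq_of_eval_eq_zero 1 hFXP
  have hGXX : eval P (dX (dX (Gpol L F))) = 2 * eval P L * eval P (dX (dX F)) ^ 2 :=
    (eval_pderiv_pderiv_mul_sq_of_eval_eq_zero 0 0 hFXP).trans (by simp only [dX]; ring)
  refine ⟨eval_dX_Bpol_of_eval_eq_zero hFP hFXP, ?_⟩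
  rw [hGY, hGXX]
  ring

/-- Condition 5 at the points P₅,…,P₁₆ :
B_X(P) = -L(P)F_XX(P)² = -G_XX(P)/2 - F_XX(P)G_Y(P)/(2F_Y(P)). -/
theorem condition5_at_FX_zeros (F L : P2)
    (P : Fin 2 → ℂ) (hFP : eval P F = 0) (hFXP : eval P (dX F) = 0)
    (hFY : eval P (dY F) ≠ 0) :
    eval P (dX (Bpol L F)) = -(eval P L) * (eval P (dX (dX F))) ^ 2 ∧
    -(eval P L) * (eval P (dX (dX F))) ^ 2
      = -(eval P (dX (dX (Gpol L F)))) / 2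
          - eval P (dX (dX F)) * eval P (dY (Gpol L F)) / (2 * eval P (dY F)) :=
  condition5_at_FX_zeros_general F L P hFP hFXP
end
end

section
/- With G = L F_X², B = h'F_X + k'F, h' = -L_X F_X - L F_XX, k' = F_X + (L_X F_XX)/2, and L = (X+Y)(X+Y+b) (so L_XX = 2), at a point P where F(P) = 0, L(P) = 0, F_X(P) = F_Y(P) ≠ 0, and L_X(P) = L_Y(P), one has B_X(P) = -F_X(P)² - (5/2)L_X(P)F_X(P)F_XX(P) = -G_XX(P)/2 - F_XX(P)G_Y(P)/(2F_Y(P)). -/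
open MvPolynomial

noncomputable section

/-- Condition 5 at the bitangency points P₁,…,P₄ :
B_X(P) = -F_X(P)² - (5/2)L_X(P)F_X(P)F_XX(P) = -G_XX(P)/2 - F_XX(P)G_Y(P)/(2F_Y(P)). -/
theorem condition5_at_bitangency (F : P2) (b : ℂ)
    (L : P2) (hLdef : L = (X 1 + X 0) * (X 1 + X 0 + C b))
    (P : Fin 2 → ℂ) (hFP : eval P F = 0) (hLP : eval P L = 0)
    (htan : eval P (dX F) = eval P (dY F)) (hFY : eval P (dY F) ≠ 0)
    (hLsym : eval P (dX L) = eval P (dY L)) :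
    eval P (dX (Bpol L F))
        = -(eval P (dX F)) ^ 2
            - (5 / 2) * eval P (dX L) * eval P (dX F) * eval P (dX (dX F)) ∧
    -(eval P (dX F)) ^ 2
        - (5 / 2) * eval P (dX L) * eval P (dX F) * eval P (dX (dX F))
      = -(eval P (dX (dX (Gpol L F)))) / 2
          - eval P (dX (dX F)) * eval P (dY (Gpol L F)) / (2 * eval P (dY F)) := by
  have hLXX : eval P (dX (dX L)) = 2 := by
    rw [hLdef]; simp [dX, pderiv_mul]; norm_num
  constructor
  · simp only [Bpol, hpol', kpol', dX, dY, pderiv_mul, map_add, map_neg, map_sub, pderiv_C,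
      eval_mul, eval_add, eval_neg, eval_sub, eval_C]
    simp only [dX] at hLP hLXX hFP
    rw [hLP, hLXX, hFP]
    simp only [map_zero]
    ring
  · simp only [Gpol, pow_two, dX, dY, pderiv_mul, map_add, map_neg, map_sub, pderiv_C,
      eval_mul, eval_add, eval_neg, eval_sub, eval_C]
    simp only [dX, dY] at hFP hLP htan hFY hLsym hLXX
    rw [hLP, hLXX, ← htan, ← hLsym]
    have h2 : eval P (pderiv 0 F) ≠ 0 := by rw [htan]; exact hFY
    field_simp
    ring
end
end

section
/- Let F ∈ ℂ[X,Y] have total degree 4 with nonzero degree-4 homogeneous part F⁴ transverse to infinity, and L ∈ ℂ[X,Y] of degree 2. With G = L F_X², A = hF_X + kF, B = h'F_X + k'F defined as in the paper, the polynomial X(G F_X + F B) + Y(G F_Y - F A) has degree at most 11, i.e. its degree-12 homogeneous component vanishes. -/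
/-!
Let `U = X F_X + Y F_Y - c F` and `V = X F_XX + Y F_XY - (c - 1) F_X` be the Euler defects of
`F` and `F_X`; for `c = deg F` they have degree below `deg F` and `deg F_X`. Substituting
`X F_X + Y F_Y = c F + U` and `X F_XX + Y F_XY = (c - 1) F_X + V`, the expression
`X (G F_X + F B) + Y (G F_Y - F A)` becomes `G U + F Q`, where `Q` is a combination of `U`, `V`
and of terms carrying the factors `L - (X + Y) L_X / 2 = b (X + Y) / 2` and
`X + Y - L_X / 2 = -b / 2`. For `L = (X + Y)(X + Y + b)` these factors have degree one below the
naive count, so the expression has degree at most `3 deg F - 1`.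
-/

open MvPolynomial

noncomputable section

section Degree

variable {σ R : Type*}

section CommSemiring

variable [CommSemiring R]

lemma totalDegree_mul_le_of_le {p q : MvPolynomial σ R} {a b : ℕ}
    (hp : p.totalDegree ≤ a) (hq : q.totalDegree ≤ b) : (p * q).totalDegree ≤ a + b :=
  (totalDegree_mul p q).trans (add_le_add hp hq)

lemma totalDegree_add_le_of_le {p q : MvPolynomial σ R} {n : ℕ}
    (hp : p.totalDegree ≤ n) (hq : q.totalDegree ≤ n) : (p + q).totalDegree ≤ n :=
  (totalDegree_add p q).trans (max_le hp hq)

lemma totalDegree_pderiv_le (i : σ) (f : MvPolynomial σ R) :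
    (pderiv i f).totalDegree ≤ f.totalDegree - 1 := by
  conv_lhs => rw [← sum_homogeneousComponent f]
  rw [map_sum]
  refine (totalDegree_finsetSum _ _).trans (Finset.sup_le fun j hj => ?_)
  have hj : j ≤ f.totalDegree := Nat.lt_succ_iff.mp (Finset.mem_range.mp hj)
  exact ((homogeneousComponent_isHomogeneous j f).pderiv.totalDegree_le).trans (by omega)

end CommSemiring

section CommRing

variable [CommRing R]

lemma totalDegree_sub_le_of_le {p q : MvPolynomial σ R} {n : ℕ}
    (hp : p.totalDegree ≤ n) (hq : q.totalDegree ≤ n) : (p - q).totalDegree ≤ n :=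
  (totalDegree_sub p q).trans (max_le hp hq)

lemma totalDegree_sum_X_mul_pderiv_sub_le [Fintype σ] {f : MvPolynomial σ R} {n : ℕ}
    (hf : f.totalDegree ≤ n) : (∑ i, X i * pderiv i f - n • f).totalDegree ≤ n - 1 := by
  have hsum : ∑ i, X i * pderiv i f - n • f =
      ∑ j ∈ Finset.range (f.totalDegree + 1),
        (j • homogeneousComponent j f - n • homogeneousComponent j f) := by
    conv_lhs => rw [← sum_homogeneousComponent f]
    simp only [map_sum, Finset.mul_sum, Finset.smul_sum, Finset.sum_sub_distrib]
    rw [Finset.sum_comm]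
    simp only [(homogeneousComponent_isHomogeneous _ f).sum_X_mul_pderiv]
  rw [hsum]
  refine (totalDegree_finsetSum _ _).trans (Finset.sup_le fun j hj => ?_)
  have hj : j ≤ n := (Nat.lt_succ_iff.mp (Finset.mem_range.mp hj)).trans hf
  rcases hj.lt_or_eq with hlt | rfl
  · have hcomp := (homogeneousComponent_isHomogeneous j f).totalDegree_le
    exact totalDegree_sub_le_of_le ((totalDegree_smul_le _ _).trans (by omega))
      ((totalDegree_smul_le _ _).trans (by omega))
  · simp

end CommRing

end Degree

def eulerDefect (c f : P2) : P2 := X 0 * dX f + X 1 * dY f - c * f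

lemma totalDegree_eulerDefect_le {f : P2} {n : ℕ} (hf : f.totalDegree ≤ n) :
    (eulerDefect n f).totalDegree ≤ n - 1 := by
  simpa [eulerDefect, dX, dY, Fin.sum_univ_two, nsmul_eq_mul] using
    totalDegree_sum_X_mul_pderiv_sub_le hf

def radialContraction (L F : P2) : P2 :=
  X 0 * (Gpol L F * dX F + F * Bpol L F) + X 1 * (Gpol L F * dY F - F * Apol L F)

lemma C_eq_two_mul_C_half (b : ℂ) : (C b : P2) = 2 * C (b / 2) := by
  rw [← map_ofNat C 2, ← C_mul]; ring_nf

lemma dX_line_mul_line (b : ℂ) :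
    dX ((X 1 + X 0) * (X 1 + X 0 + C b)) = 2 * (X 0 + X 1 + C (b / 2)) := by
  simp only [dX, Derivation.leibniz, map_add, pderiv_X, Pi.single_eq_of_ne one_ne_zero,
    Pi.single_eq_same, derivation_C, smul_eq_mul]
  rw [C_eq_two_mul_C_half]
  ring

lemma radialContraction_eq {b : ℂ} {L : P2} (hL : L = (X 1 + X 0) * (X 1 + X 0 + C b))
    (c F : P2) :
    radialContraction L F = Gpol L F * eulerDefect c F
      + F * ((X 0 + X 1 + C (b / 2)) * (F * eulerDefect (c - 1) (dX F) - eulerDefect c F * dX F)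
        - L * eulerDefect (c - 1) (dX F) * dX F + C (b / 2) * ((X 0 + X 1) * dX F - F) * dX F) := by
  have hdL : dX L = 2 * (X 0 + X 1 + C (b / 2)) := hL ▸ dX_line_mul_line b
  have hhalf : C ((1:ℂ)/2) * dX L = X 0 + X 1 + C (b / 2) := by
    rw [hdL, ← mul_assoc, ← map_ofNat C 2, ← C_mul]; norm_num
  simp only [radialContraction, Gpol, Apol, Bpol, hpol, kpol, hpol', kpol', eulerDefect]
  rw [hhalf, hdL, hL, C_eq_two_mul_C_half b]
  ring

lemma totalDegree_radialContraction_le {b : ℂ} {L : P2}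
    (hL : L = (X 1 + X 0) * (X 1 + X 0 + C b)) {F : P2} {d : ℕ} (hF : F.totalDegree ≤ d + 2) :
    (radialContraction L F).totalDegree ≤ 3 * d + 5 := by
  have hFX : (dX F).totalDegree ≤ d + 1 := (totalDegree_pderiv_le 0 F).trans (by omega)
  have hU : (eulerDefect (d + 2 : ℕ) F).totalDegree ≤ d + 1 := totalDegree_eulerDefect_le hF
  have hV : (eulerDefect (d + 1 : ℕ) (dX F)).totalDegree ≤ d := totalDegree_eulerDefect_le hFX
  have hlin (i j : Fin 2) : (X i + X j : P2).totalDegree ≤ 1 :=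
    totalDegree_add_le_of_le (totalDegree_X _).le (totalDegree_X _).le
  have haff (i j : Fin 2) (a : ℂ) : (X i + X j + C a : P2).totalDegree ≤ 1 :=
    totalDegree_add_le_of_le (hlin i j) ((totalDegree_C a).trans_le zero_le_one)
  have hLdeg : L.totalDegree ≤ 2 := hL ▸ totalDegree_mul_le_of_le (hlin 1 0) (haff 1 0 b)
  have hG : (Gpol L F).totalDegree ≤ 2 * d + 4 :=
    (totalDegree_mul_le_of_le hLdeg (totalDegree_pow (dX F) 2)).trans (by omega)
  have hQ₁ : ((X 0 + X 1 + C (b / 2)) * (F * eulerDefect (d + 1 : ℕ) (dX F)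
      - eulerDefect (d + 2 : ℕ) F * dX F)).totalDegree ≤ 2 * d + 3 :=
    (totalDegree_mul_le_of_le (haff 0 1 _) (totalDegree_sub_le_of_le
      ((totalDegree_mul_le_of_le hF hV).trans (by omega))
      (totalDegree_mul_le_of_le hU hFX))).trans (by omega)
  have hQ₂ : (L * eulerDefect (d + 1 : ℕ) (dX F) * dX F).totalDegree ≤ 2 * d + 3 :=
    (totalDegree_mul_le_of_le (totalDegree_mul_le_of_le hLdeg hV) hFX).trans (by omega)
  have hQ₃ : (C (b / 2) * ((X 0 + X 1) * dX F - F) * dX F).totalDegree ≤ 2 * d + 3 :=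
    (totalDegree_mul_le_of_le (totalDegree_mul_le_of_le (totalDegree_C _).le
      (totalDegree_sub_le_of_le ((totalDegree_mul_le_of_le (hlin 0 1) hFX).trans (by omega)) hF))
      hFX).trans (by omega)
  rw [radialContraction_eq hL ((d + 2 : ℕ) : P2),
    show ((d + 2 : ℕ) : P2) - 1 = (d + 1 : ℕ) by push_cast; ring]
  exact totalDegree_add_le_of_le ((totalDegree_mul_le_of_le hG hU).trans (by omega))
    ((totalDegree_mul_le_of_le hF (totalDegree_add_le_of_le
      (totalDegree_sub_le_of_le hQ₁ hQ₂) hQ₃)).trans (by omega))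

theorem degree12_component_vanishes_general (F : P2) (b : ℂ)
    (L : P2) (hLdef : L = (X 1 + X 0) * (X 1 + X 0 + C b))
    (hF4 : F.totalDegree = 4) :
    homogeneousComponent 12
      (X 0 * (Gpol L F * dX F + F * Bpol L F)
        + X 1 * (Gpol L F * dY F - F * Apol L F)) = 0 :=
  homogeneousComponent_eq_zero 12 _
    ((totalDegree_radialContraction_le hLdef (d := 2) hF4.le).trans_lt (by norm_num))

/-- The degree-12 homogeneous component of X(GF_X + FB) + Y(GF_Y - FA)
vanishes, so the foliation G dF + F(B dX - A dY) = 0 has degree 10. -/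
theorem degree12_component_vanishes (F : P2) (b : ℂ)
    (L : P2) (hLdef : L = (X 1 + X 0) * (X 1 + X 0 + C b))
    (hF4 : F.totalDegree = 4)
    (htop : homogeneousComponent 4 F ≠ 0)
    (htransverse : Squarefree (homogeneousComponent 4 F)) :
    homogeneousComponent 12
      (X 0 * (Gpol L F * dX F + F * Bpol L F)
        + X 1 * (Gpol L F * dY F - F * Apol L F)) = 0 :=
  degree12_component_vanishes_general F b L hLdef hF4
end
end

section
/- In the variant family with G = L C², h = (L_X(C+F_Y))/2 + L C_Y, k = -C - (L_X C_Y)/2, h' = -(L_X(C+F_X))/2 - L C_X, k' = C + (L_X C_X)/2, A = hF_X + kF, B = h'F_X + k'F: at a point P with F(P) = 0, L(P) = 0, F_X(P) = F_Y(P), L_X(P) = L_Y(P), and C(P) = F_X(P), one has A(P)F_X(P) + B(P)F_Y(P) = 0. -/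
open MvPolynomial

noncomputable section

/-- Condition 2 for the variant family at a bitangency point where the
cubic Cu agrees with F_X : A·F_X + B·F_Y = 0 at P. -/
theorem variant_condition2 (F Cu : P2) (b : ℂ)
    (L : P2) (hLdef : L = (X 1 + X 0) * (X 1 + X 0 + C b))
    (hF4 : F.totalDegree = 4) (hCu3 : Cu.totalDegree = 3)
    (P : Fin 2 → ℂ) (hFP : eval P F = 0) (hLP : eval P L = 0)
    (htan : eval P (dX F) = eval P (dY F))
    (hLsym : eval P (dX L) = eval P (dY L))
    (hCuP : eval P Cu = eval P (dX F)) :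
    eval P ((C ((1:ℂ)/2) * dX L * (Cu + dY F) + L * dY Cu) * dX F
        + (- Cu - C ((1:ℂ)/2) * dX L * dY Cu) * F) * eval P (dX F)
      + eval P ((- (C ((1:ℂ)/2) * dX L * (Cu + dX F)) - L * dX Cu) * dX F
        + (Cu + C ((1:ℂ)/2) * dX L * dX Cu) * F) * eval P (dY F) = 0 := by
  simp only [map_add, map_mul, map_neg, map_sub, hFP, hLP, hCuP, ← htan]
  ring
end
end
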